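/- Let h, f, g : ℝ → ℝ be functions and let s, t be real numbers with 0 ≤ s ≤ t, h(s) ≠ 0 and h(t) ≠ 0. Let E₁^{[s,t]} be the evolution algebra whose structure matrix is (h(t)/2) times the matrix with constant rows (c₁,c₁,c₁), (c₂,c₂,c₂), (c₃,c₃,c₃), where c₁ = 1/h(s) + f(s), c₂ = 1/h(s) − g(s), c₃ = g(s) − f(s). If (1/h(s)+f(s))·(1/h(s)−g(s))·(g(s)−f(s)) ≠ 0, (g(s)−f(s))·(2/h(s)+f(s)−g(s)) < 0, and (2/h(s))·(1/h(s)+f(s))·(1/h(s)−g(s))·(2/h(s)+f(s)−g(s)) < 0, then E₁^{[s,t]} is isomorphic to the evolution algebra E₉ whose structure matrix has rows (1,0,0), (−1,0,0), (−1,0,0). -/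

import Mathlib

/-- Evolution algebra multiplication on ℝ³ determined by a structure matrix `A`:
`(x ∗_A y) j = ∑ i, x i * y i * A i j`. -/
def evolMul (A : Matrix (Fin 3) (Fin 3) ℝ) (x y : Fin 3 → ℝ) : Fin 3 → ℝ :=
  fun j => ∑ i, x i * y i * A i j

/-- The evolution algebras with structure matrices `A` and `B` are isomorphic:
there is an ℝ-linear equivalence of ℝ³ intertwining the two multiplications. -/
def EvolIso (A B : Matrix (Fin 3) (Fin 3) ℝ) : Prop :=
  ∃ f : (Fin 3 → ℝ) ≃ₗ[ℝ] (Fin 3 → ℝ),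
    ∀ x y, f (evolMul A x y) = evolMul B (f x) (f y)

/-!
Both algebras are of rank one: with `D = diag(a₀, a₁, a₂)`, `u = (1, 1, 1)` and
`J = diag(1, -1, -1)`, the first has product `x y = (xᵀ D y) u` and `E₉` has `x y = (xᵀ J y) e₀`.
A linear map `F` is therefore an isomorphism as soon as `F u = S e₀` and `Fᵀ J F = S D` for one
scalar `S`; evaluating at `x = y = u` forces `S = a₀ + a₁ + a₂`. Since `S D (u, u) = S² > 0`,
such an `F` exists once `S D` is negative definite on the `D`-orthogonal complement of `u`, and
that is what the two sign conditions say. Explicitly, the rows of `F` are `D u`, `p (-1, 1, 0)`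
and `q (-a₀, -a₁, a₀ + a₁)`, the last two vanishing at `u`, with `p² (a₀ + a₁) = -S a₀ a₁` and
`q² (a₀ + a₁) = -a₂`.
-/

open Matrix

theorem evolMul_vecMulVec (d w x y : Fin 3 → ℝ) :
    evolMul (vecMulVec d w) x y = ((d * x) ⬝ᵥ y) • w := by
  ext j
  simp only [evolMul, vecMulVec_apply, dotProduct, Pi.mul_apply, Pi.smul_apply, smul_eq_mul,
    Finset.sum_mul]
  exact Finset.sum_congr rfl fun i _ => by ring

theorem mul_mulVec_dotProduct_mulVec {n R : Type*} [Fintype n] [DecidableEq n] [CommRing R]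
    (d x y : n → R) (F : Matrix n n R) :
    (d * (F *ᵥ x)) ⬝ᵥ (F *ᵥ y) = x ⬝ᵥ ((Fᵀ * diagonal d * F) *ᵥ y) := by
  rw [← mulVec_mulVec, ← mulVec_mulVec, dotProduct_mulVec x Fᵀ, vecMul_transpose]
  simp only [dotProduct, mulVec_diagonal, Pi.mul_apply]
  exact Finset.sum_congr rfl fun i _ => by ring

theorem isUnit_det_of_transpose_mul_diagonal_mul_eq {n R : Type*} [Fintype n] [DecidableEq n]
    [Field R] (F : Matrix n n R) (d d' : n → R) (c : R) (hc : c ≠ 0) (hd : ∀ i, d i ≠ 0)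
    (hF : Fᵀ * diagonal d' * F = c • diagonal d) : IsUnit F.det := by
  have hdet := congrArg det hF
  rw [det_mul, det_mul, det_transpose, det_smul, det_diagonal, det_diagonal] at hdet
  refine isUnit_iff_ne_zero.mpr fun h0 => ?_
  rw [h0, zero_mul, zero_mul, eq_comm] at hdet
  exact mul_ne_zero (pow_ne_zero _ hc) (Finset.prod_ne_zero_iff.mpr fun i _ => hd i) hdet

theorem evolIso_of_mulVec (A B F : Matrix (Fin 3) (Fin 3) ℝ) (hF : IsUnit F.det)
    (h : ∀ x y, F *ᵥ evolMul A x y = evolMul B (F *ᵥ x) (F *ᵥ y)) : EvolIso A B :=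
  ⟨F.toLinearEquiv' (F.invertibleOfIsUnitDet hF), h⟩

theorem evolIso_vecMulVec_of_congr (d w d' w' : Fin 3 → ℝ) (F : Matrix (Fin 3) (Fin 3) ℝ)
    (c : ℝ) (hc : c ≠ 0) (hd : ∀ i, d i ≠ 0) (hFw : F *ᵥ w = c • w')
    (hF : Fᵀ * diagonal d' * F = c • diagonal d) :
    EvolIso (vecMulVec d w) (vecMulVec d' w') := by
  refine evolIso_of_mulVec _ _ F (isUnit_det_of_transpose_mul_diagonal_mul_eq F d d' c hc hd hF)
    fun x y => ?_
  rw [evolMul_vecMulVec, evolMul_vecMulVec, mulVec_smul, hFw, mul_mulVec_dotProduct_mulVec, hF,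
    smul_mulVec, smul_smul]
  congr 1
  simp only [dotProduct, Pi.smul_apply, mulVec_diagonal, Pi.mul_apply, smul_eq_mul,
    Finset.sum_mul]
  exact Finset.sum_congr rfl fun i _ => by ring

theorem exists_sq_mul_eq (P r : ℝ) (hP : P ≠ 0) (h : 0 ≤ r * P) : ∃ p : ℝ, p ^ 2 * P = r := by
  have hr : 0 ≤ r / P := by
    rw [show r / P = r * P / P ^ 2 by field_simp]
    positivity
  exact ⟨√(r / P), by rw [Real.sq_sqrt hr]; field_simp⟩

theorem evolIso_constRows_E9 (a₀ a₁ a₂ : ℝ) (ha₀ : a₀ ≠ 0) (ha₁ : a₁ ≠ 0) (ha₂ : a₂ ≠ 0)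
    (hP : a₂ * (a₀ + a₁) < 0) (hQ : (a₀ + a₁ + a₂) * a₀ * a₁ * (a₀ + a₁) < 0) :
    EvolIso !![a₀, a₀, a₀; a₁, a₁, a₁; a₂, a₂, a₂] !![1, 0, 0; -1, 0, 0; -1, 0, 0] := by
  have hP0 : a₀ + a₁ ≠ 0 := by rintro h; simp [h] at hP
  have hS0 : a₀ + a₁ + a₂ ≠ 0 := by rintro h; simp [h] at hQ
  obtain ⟨p, hp⟩ := exists_sq_mul_eq (a₀ + a₁) (-((a₀ + a₁ + a₂) * a₀ * a₁)) hP0 (by linarith)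
  obtain ⟨q, hq⟩ := exists_sq_mul_eq (a₀ + a₁) (-a₂) hP0 (by linarith)
  have hA : !![a₀, a₀, a₀; a₁, a₁, a₁; a₂, a₂, a₂] = vecMulVec ![a₀, a₁, a₂] 1 := by
    ext i j; fin_cases i <;> fin_cases j <;> simp
  have hB : !![1, 0, 0; -1, 0, 0; -1, 0, 0] =
      vecMulVec ![1, -1, -1] (Pi.single 0 1 : Fin 3 → ℝ) := by
    ext i j; fin_cases i <;> fin_cases j <;> simp [vecMulVec_apply]
  rw [hA, hB]
  refine evolIso_vecMulVec_of_congr _ _ _ _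
    !![a₀, a₁, a₂; -p, p, 0; -q * a₀, -q * a₁, q * (a₀ + a₁)] (a₀ + a₁ + a₂) hS0
    (fun i => by fin_cases i <;> assumption) ?_ ?_
  · ext i; fin_cases i <;> simp [mulVec, dotProduct, Fin.sum_univ_three]; ring
  · ext i j; fin_cases i <;> fin_cases j <;> simp [mul_apply, Fin.sum_univ_three]
    all_goals grind

theorem stmt_general (h f g : ℝ → ℝ) (s t : ℝ) (hht : h t ≠ 0)
    (c₁ c₂ c₃ : ℝ) (hc₁ : c₁ = 1 / h s + f s) (hc₂ : c₂ = 1 / h s - g s)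
    (hc₃ : c₃ = g s - f s)
    (h1 : (1 / h s + f s) * (1 / h s - g s) * (g s - f s) ≠ 0)
    (h2 : (g s - f s) * (2 / h s + f s - g s) < 0)
    (h3 : (2 / h s) * (1 / h s + f s) * (1 / h s - g s) * (2 / h s + f s - g s) < 0) :
    EvolIso ((h t / 2) • (!![c₁, c₁, c₁; c₂, c₂, c₂; c₃, c₃, c₃] : Matrix (Fin 3) (Fin 3) ℝ)) (!![1, 0, 0; -1, 0, 0; -1, 0, 0] : Matrix (Fin 3) (Fin 3) ℝ) := by
  set k := h t / 2
  have hk : k ≠ 0 := div_ne_zero hht two_ne_zero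
  have hmat : k • (!![c₁, c₁, c₁; c₂, c₂, c₂; c₃, c₃, c₃] : Matrix (Fin 3) (Fin 3) ℝ) =
      !![k * c₁, k * c₁, k * c₁; k * c₂, k * c₂, k * c₂; k * c₃, k * c₃, k * c₃] := by
    ext i j; fin_cases i <;> fin_cases j <;> rfl
  subst hc₁ hc₂ hc₃
  obtain ⟨h12, hc₃⟩ := mul_ne_zero_iff.mp h1
  obtain ⟨hc₁, hc₂⟩ := mul_ne_zero_iff.mp h12
  rw [hmat]
  refine evolIso_constRows_E9 _ _ _ (mul_ne_zero hk hc₁) (mul_ne_zero hk hc₂) (mul_ne_zero hk hc₃)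
    ?_ ?_
  · calc _ = k ^ 2 * ((g s - f s) * (2 / h s + f s - g s)) := by ring
      _ < 0 := mul_neg_of_pos_of_neg (by positivity) h2
  · calc _ = k ^ 4 * ((2 / h s) * (1 / h s + f s) * (1 / h s - g s) * (2 / h s + f s - g s)) := by
          ring
      _ < 0 := mul_neg_of_pos_of_neg (by positivity) h3

theorem stmt (h f g : ℝ → ℝ) (s t : ℝ) (hst0 : 0 ≤ s) (hst : s ≤ t)
    (hhs : h s ≠ 0) (hht : h t ≠ 0)
    (c₁ c₂ c₃ : ℝ) (hc₁ : c₁ = 1 / h s + f s) (hc₂ : c₂ = 1 / h s - g s)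
    (hc₃ : c₃ = g s - f s)
    (h1 : (1 / h s + f s) * (1 / h s - g s) * (g s - f s) ≠ 0)
    (h2 : (g s - f s) * (2 / h s + f s - g s) < 0)
    (h3 : (2 / h s) * (1 / h s + f s) * (1 / h s - g s) * (2 / h s + f s - g s) < 0) :
    EvolIso ((h t / 2) • (!![c₁, c₁, c₁; c₂, c₂, c₂; c₃, c₃, c₃] : Matrix (Fin 3) (Fin 3) ℝ)) (!![1, 0, 0; -1, 0, 0; -1, 0, 0] : Matrix (Fin 3) (Fin 3) ℝ) :=
  stmt_general h f g s t hht c₁ c₂ c₃ hc₁ hc₂ hc₃ h1 h2 h3
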